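/- Let q>2 be real and set a(x) = ((q−1)e^x − e^{2x})/(e^x+q−1)³ for x≥0. Let r∈ℝ and b>0, let φ∈C²([b,∞)) be nonnegative, and assume that w↦w·φ'(w) is nonnegative and nondecreasing on [b,∞) with w·φ'(w)→∞ as w→∞. Define Φ(t) = ∫_{bt}^{∞} x^r · e^{−φ(x/t)} · a(x) dx for t>0. Then there is exactly one t_0∈(0,∞) such that Φ(t_0)=0. -/

import Mathlib

open MeasureTheory Filter Topology Set

/-- `a(x) = ((q−1)e^x − e^{2x})/(e^x+q−1)³`. -/
noncomputable def afun (q : ℝ) (x : ℝ) : ℝ :=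
  ((q - 1) * Real.exp x - Real.exp (2 * x)) / (Real.exp x + q - 1) ^ 3

/-!
Write `ψ(w) = w φ'(w)` and `x₀ = log (q - 1)`, the only sign change of `a` (from `+` to `-`).
For `t₁ < t₂` the ratio `e^{-φ(x/t₂)} / e^{-φ(x/t₁)} = e^{φ(x/t₁) - φ(x/t₂)}` has derivative
`(ψ(x/t₁) - ψ(x/t₂)) / x ≥ 0` in `x`, so against an integrand that changes sign once it can only
lower the integral relative to its value at `x₀`; hence `Φ(t₁) ≤ 0` forces `Φ(t₂) < 0`, and `Φ`
has at most one zero. `Φ` is continuous and negative once `bt ≥ x₀`. For small `t`, after dividing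
by `e^{-φ(x₀/t)}`, the integral over `(x₀/2, x₀)` is bounded below by a positive constant, while
`φ(x/t) ≥ φ(x₀/t) + ψ(x₀/t) log (x/x₀)` bounds the tail over `(x₀, ∞)` by
`∫ x^r e^{-x} (x/x₀)^{-ψ(x₀/t)}`, which tends to `0` as `ψ(x₀/t) → ∞`. So `Φ` takes both signs.
-/

open Real

section afun

variable {q x : ℝ}

lemma afun_eq : afun q x = exp x * (q - 1 - exp x) / (exp x + q - 1) ^ 3 := by
  rw [afun, two_mul, exp_add]; ring

lemma afun_denom_pos (hq : 1 ≤ q) (x : ℝ) : 0 < exp x + q - 1 := by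
  linarith [exp_pos x]

lemma afun_pos_iff (hq : 1 < q) : 0 < afun q x ↔ x < log (q - 1) := by
  rw [afun_eq, lt_log_iff_exp_lt (by linarith), ← sub_pos (b := exp x),
    div_pos_iff_of_pos_right (pow_pos (afun_denom_pos hq.le x) 3),
    mul_pos_iff_of_pos_left (exp_pos x)]

lemma afun_neg_iff (hq : 1 < q) : afun q x < 0 ↔ log (q - 1) < x := by
  rw [afun_eq, log_lt_iff_lt_exp (by linarith), ← neg_pos, ← neg_div, ← mul_neg, neg_sub,
    div_pos_iff_of_pos_right (pow_pos (afun_denom_pos hq.le x) 3),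
    mul_pos_iff_of_pos_left (exp_pos x), sub_pos]

lemma afun_nonneg_iff (hq : 1 < q) : 0 ≤ afun q x ↔ x ≤ log (q - 1) := by
  rw [← not_lt, afun_neg_iff hq, not_lt]

lemma afun_nonpos_iff (hq : 1 < q) : afun q x ≤ 0 ↔ log (q - 1) ≤ x := by
  rw [← not_lt, afun_pos_iff hq, not_lt]

lemma abs_afun_le (hq : 1 ≤ q) (x : ℝ) : |afun q x| ≤ exp (-x) := by
  have hs := afun_denom_pos hq x
  have hex := exp_pos x
  have hnum : |q - 1 - exp x| ≤ exp x + q - 1 := abs_le.2 ⟨by linarith, by linarith⟩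
  calc |afun q x| = exp x * |q - 1 - exp x| / (exp x + q - 1) ^ 3 := by
        rw [afun_eq, abs_div, abs_mul, abs_of_pos hex, abs_of_pos (pow_pos hs 3)]
    _ ≤ exp x * (exp x + q - 1) / (exp x + q - 1) ^ 3 := by gcongr
    _ = exp x / (exp x + q - 1) ^ 2 := by field_simp
    _ ≤ exp x / exp x ^ 2 := by gcongr; linarith
    _ = exp (-x) := by rw [exp_neg]; field_simp

lemma continuous_afun (hq : 1 ≤ q) : Continuous (afun q) := by
  unfold afun
  exact Continuous.div (by fun_prop) (by fun_prop) fun x => (pow_pos (afun_denom_pos hq x) 3).ne'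

end afun

lemma setIntegral_pos_of_forall_pos {f : ℝ → ℝ} {s : Set ℝ} (hs : MeasurableSet s)
    (hs₀ : volume s ≠ 0) (hf : IntegrableOn f s) (hpos : ∀ x ∈ s, 0 < f x) :
    0 < ∫ x in s, f x := by
  rw [setIntegral_pos_iff_support_of_nonneg_ae
    ((ae_restrict_iff' hs).2 (ae_of_all _ fun x hx => (hpos x hx).le)) hf,
    inter_eq_right.2 fun x hx => Function.mem_support.2 (hpos x hx).ne']
  exact pos_iff_ne_zero.2 hs₀

lemma integrableOn_rpow_mul_exp_neg_Ioi (r : ℝ) {c : ℝ} (hc : 0 < c) :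
    IntegrableOn (fun x => x ^ r * exp (-x)) (Ioi c) := by
  refine integrable_of_isBigO_exp_neg one_half_pos
    (ContinuousOn.mul (fun x hx => (continuousAt_id.rpow_const
      (Or.inl (hc.trans_le hx).ne')).continuousWithinAt) (by fun_prop)) ?_
  have := ((isLittleO_rpow_exp_pos_mul_atTop r one_half_pos).isBigO).mul
    (Asymptotics.isBigO_refl (fun x : ℝ => exp (-x)) atTop)
  refine this.congr_right fun x => ?_
  rw [← exp_add]; ring_nf

lemma setIntegral_mul_le_of_signChange {f h : ℝ → ℝ} {s : Set ℝ} {x₀ : ℝ}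
    (hs : MeasurableSet s) (hx₀ : x₀ ∈ s) (hf : IntegrableOn f s)
    (hfh : IntegrableOn (fun x => f x * h x) s)
    (hf_nonneg : ∀ x ∈ s, x ≤ x₀ → 0 ≤ f x) (hf_nonpos : ∀ x ∈ s, x₀ ≤ x → f x ≤ 0)
    (hh : MonotoneOn h s) :
    ∫ x in s, f x * h x ≤ h x₀ * ∫ x in s, f x := by
  rw [← integral_const_mul]
  refine setIntegral_mono_on hfh (hf.const_mul _) hs fun x hx => ?_
  rcases le_total x x₀ with hle | hle
  · nlinarith [hf_nonneg x hx hle, hh hx hx₀ hle]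
  · nlinarith [hf_nonpos x hx hle, hh hx₀ hx hle]

lemma norm_mul_rpow_neg_le (a : ℝ) {c x M : ℝ} (hc : 0 < c) (hx : c ≤ x) (hM : 0 ≤ M) :
    ‖a * (x / c) ^ (-M)‖ ≤ ‖a‖ := by
  rw [norm_mul, Real.norm_of_nonneg (rpow_nonneg (div_pos (hc.trans_le hx) hc).le _)]
  exact mul_le_of_le_one_right (norm_nonneg _)
    (rpow_le_one_of_one_le_of_nonpos ((one_le_div hc).2 hx) (neg_nonpos.2 hM))

lemma aestronglyMeasurable_mul_rpow_neg {g : ℝ → ℝ} {c : ℝ} (hg : IntegrableOn g (Ioi c))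
    (M : ℝ) : AEStronglyMeasurable (fun x => g x * (x / c) ^ (-M)) (volume.restrict (Ioi c)) :=
  hg.aestronglyMeasurable.mul ((measurable_id.div_const c).pow_const _).aestronglyMeasurable

lemma integrableOn_mul_rpow_neg {g : ℝ → ℝ} {c M : ℝ} (hc : 0 < c)
    (hg : IntegrableOn g (Ioi c)) (hM : 0 ≤ M) :
    IntegrableOn (fun x => g x * (x / c) ^ (-M)) (Ioi c) :=
  hg.norm.mono' (aestronglyMeasurable_mul_rpow_neg hg M) ((ae_restrict_iff' measurableSet_Ioi).2
    (ae_of_all _ fun x hx => norm_mul_rpow_neg_le (g x) hc (le_of_lt hx) hM))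

lemma tendsto_setIntegral_mul_rpow_neg {g : ℝ → ℝ} {c : ℝ} (hc : 0 < c)
    (hg : IntegrableOn g (Ioi c)) :
    Tendsto (fun M : ℝ => ∫ x in Ioi c, g x * (x / c) ^ (-M)) atTop (𝓝 0) := by
  have hlim : ∀ x ∈ Ioi c, Tendsto (fun M : ℝ => g x * (x / c) ^ (-M)) atTop (𝓝 0) := by
    intro x hx
    simpa using ((tendsto_rpow_atBot_of_base_gt_one _ ((one_lt_div hc).2 hx)).comp
      tendsto_neg_atTop_atBot).const_mul (g x)
  simpa using tendsto_integral_filter_of_dominated_convergence (fun x => ‖g x‖)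
    (Eventually.of_forall (aestronglyMeasurable_mul_rpow_neg hg))
    ((eventually_ge_atTop 0).mono fun M hM => (ae_restrict_iff' measurableSet_Ioi).2
      (ae_of_all _ fun x hx => norm_mul_rpow_neg_le (g x) hc (le_of_lt hx) hM))
    hg.norm ((ae_restrict_iff' measurableSet_Ioi).2 (ae_of_all _ hlim))

section phi

variable {b : ℝ} {φ : ℝ → ℝ}

lemma hasDerivAt_deriv_of_lt (hφ : DifferentiableOn ℝ φ (Ici b)) {w : ℝ} (hw : b < w) :
    HasDerivAt φ (deriv φ w) w :=
  ((hφ w hw.le).differentiableAt (Ici_mem_nhds hw)).hasDerivAt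

lemma hasDerivAt_comp_div (hφ : DifferentiableOn ℝ φ (Ici b)) {t x : ℝ} (ht : 0 < t)
    (hx : b * t < x) : HasDerivAt (fun y => φ (y / t)) (deriv φ (x / t) / t) x := by
  simpa [div_eq_mul_inv, Function.comp_def] using
    (hasDerivAt_deriv_of_lt hφ ((lt_div_iff₀ ht).2 hx)).comp x ((hasDerivAt_id x).div_const t)

lemma continuousOn_comp_div (hφ : ContinuousOn φ (Ici b)) {t : ℝ} (ht : 0 < t) :
    ContinuousOn (fun y => φ (y / t)) (Ici (b * t)) :=
  hφ.comp (continuousOn_id.div_const t) fun _ hx => (le_div_iff₀ ht).2 hx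

lemma monotoneOn_of_mul_deriv_nonneg (hb : 0 < b) (hφ : DifferentiableOn ℝ φ (Ici b))
    (hψnn : ∀ w ∈ Ici b, 0 ≤ w * deriv φ w) : MonotoneOn φ (Ici b) := by
  refine monotoneOn_of_hasDerivWithinAt_nonneg (f' := deriv φ) (convex_Ici b) hφ.continuousOn
    (fun w hw => ?_) fun w hw => ?_ <;> rw [interior_Ici, mem_Ioi] at hw
  · exact (hasDerivAt_deriv_of_lt hφ hw).hasDerivWithinAt
  · exact nonneg_of_mul_nonneg_right (hψnn w hw.le) (hb.trans hw)

lemma add_mul_log_div_le (hb : 0 < b) (hφ : DifferentiableOn ℝ φ (Ici b))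
    (hψ : MonotoneOn (fun w => w * deriv φ w) (Ici b)) {u v : ℝ} (hu : b ≤ u) (huv : u ≤ v) :
    φ u + u * deriv φ u * log (v / u) ≤ φ v := by
  have hu₀ : 0 < u := hb.trans_le hu
  set M := u * deriv φ u
  have hmono : MonotoneOn (fun w => φ w - M * log w) (Ici u) := by
    refine monotoneOn_of_hasDerivWithinAt_nonneg (f' := fun w => deriv φ w - M / w)
      (convex_Ici u) ((hφ.continuousOn.mono (Ici_subset_Ici.2 hu)).sub
        ((continuousOn_log.mono fun w hw => (hu₀.trans_le hw).ne').const_smul M))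
      (fun w hw => ?_) fun w hw => ?_ <;> rw [interior_Ici] at hw
    · exact ((hasDerivAt_deriv_of_lt hφ (hu.trans_lt hw)).sub
        ((hasDerivAt_log (hu₀.trans hw).ne').const_mul M)).hasDerivWithinAt.congr_deriv
        (by field_simp)
    · have hw₀ : 0 < w := hu₀.trans hw
      have : M ≤ w * deriv φ w := hψ hu (hu.trans hw.le) hw.le
      rw [sub_nonneg, div_le_iff₀ hw₀]; linarith
  have := hmono self_mem_Ici huv huv
  rw [log_div (hu₀.trans_le huv).ne' hu₀.ne']
  simp only at this; linarith

lemma monotoneOn_sub_comp_div (hb : 0 < b) (hφ : DifferentiableOn ℝ φ (Ici b))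
    (hψ : MonotoneOn (fun w => w * deriv φ w) (Ici b)) {t₁ t₂ : ℝ} (ht₁ : 0 < t₁)
    (ht : t₁ ≤ t₂) : MonotoneOn (fun x => φ (x / t₁) - φ (x / t₂)) (Ici (b * t₂)) := by
  have ht₂ : 0 < t₂ := ht₁.trans_le ht
  have hsub : Ici (b * t₂) ⊆ Ici (b * t₁) := Ici_subset_Ici.2 (by gcongr)
  refine monotoneOn_of_hasDerivWithinAt_nonneg
    (f' := fun x => deriv φ (x / t₁) / t₁ - deriv φ (x / t₂) / t₂) (convex_Ici _)
    (((continuousOn_comp_div hφ.continuousOn ht₁).mono hsub).sub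
      (continuousOn_comp_div hφ.continuousOn ht₂)) (fun x hx => ?_) fun x hx => ?_ <;>
    rw [interior_Ici] at hx
  · exact ((hasDerivAt_comp_div hφ ht₁ (lt_of_le_of_lt (by gcongr) hx)).sub
      (hasDerivAt_comp_div hφ ht₂ hx)).hasDerivWithinAt
  · have hx₀ : 0 < x := (mul_pos hb ht₂).trans hx
    have h₂ : b ≤ x / t₂ := (le_div_iff₀ ht₂).2 hx.le
    have h₁₂ : x / t₂ ≤ x / t₁ := div_le_div_of_nonneg_left hx₀.le ht₁ ht
    have := hψ h₂ (h₂.trans h₁₂) h₁₂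
    rw [sub_nonneg, ← mul_le_mul_iff_right₀ hx₀]
    calc x * (deriv φ (x / t₂) / t₂) = x / t₂ * deriv φ (x / t₂) := by ring
      _ ≤ x / t₁ * deriv φ (x / t₁) := this
      _ = x * (deriv φ (x / t₁) / t₁) := by ring

end phi

section Φ

variable {q r b : ℝ} {φ : ℝ → ℝ}

noncomputable def Φintegrand (q r : ℝ) (φ : ℝ → ℝ) (t x : ℝ) : ℝ :=
  x ^ r * exp (-φ (x / t)) * afun q x

noncomputable def Φ (q r b : ℝ) (φ : ℝ → ℝ) (t : ℝ) : ℝ :=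
  ∫ x in Ioi (b * t), Φintegrand q r φ t x

lemma Φintegrand_eq_mul_exp (t₁ t₂ x : ℝ) :
    Φintegrand q r φ t₂ x = Φintegrand q r φ t₁ x * exp (φ (x / t₁) - φ (x / t₂)) := by
  rw [Φintegrand, Φintegrand, show -φ (x / t₂) = -φ (x / t₁) + (φ (x / t₁) - φ (x / t₂)) by ring,
    exp_add]
  ring

lemma continuousOn_Φintegrand (hq : 1 ≤ q) (hb : 0 < b) (hφ : ContinuousOn φ (Ici b))
    {t : ℝ} (ht : 0 < t) : ContinuousOn (Φintegrand q r φ t) (Ici (b * t)) :=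
  ((continuousOn_id.rpow_const fun _ hx => Or.inl ((mul_pos hb ht).trans_le hx).ne').mul
    (continuousOn_comp_div hφ ht).neg.rexp).mul (continuous_afun hq).continuousOn

lemma norm_Φintegrand_le (hq : 1 ≤ q) (hb : 0 < b) (hφm : MonotoneOn φ (Ici b)) {t x : ℝ}
    (ht : 0 < t) (hx : b * t ≤ x) :
    ‖Φintegrand q r φ t x‖ ≤ exp (-φ b) * (x ^ r * exp (-x)) := by
  have hx₀ : 0 < x := (mul_pos hb ht).trans_le hx
  have hxt : b ≤ x / t := (le_div_iff₀ ht).2 hx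
  calc ‖Φintegrand q r φ t x‖ = x ^ r * exp (-φ (x / t)) * |afun q x| := by
        rw [Φintegrand, Real.norm_eq_abs, abs_mul, abs_of_pos (by positivity)]
    _ ≤ x ^ r * exp (-φ b) * exp (-x) := by
        gcongr
        · exact hφm self_mem_Ici hxt hxt
        · exact abs_afun_le hq x
    _ = exp (-φ b) * (x ^ r * exp (-x)) := by ring

lemma integrableOn_Φintegrand (hq : 1 ≤ q) (hb : 0 < b) (hφ : ContinuousOn φ (Ici b))
    (hφm : MonotoneOn φ (Ici b)) {t : ℝ} (ht : 0 < t) :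
    IntegrableOn (Φintegrand q r φ t) (Ioi (b * t)) :=
  Integrable.mono' ((integrableOn_rpow_mul_exp_neg_Ioi r (mul_pos hb ht)).const_mul _)
    (((continuousOn_Φintegrand hq hb hφ ht).mono Ioi_subset_Ici_self).aestronglyMeasurable
      measurableSet_Ioi)
    ((ae_restrict_iff' measurableSet_Ioi).2
      (ae_of_all _ fun _ hx => norm_Φintegrand_le hq hb hφm ht (le_of_lt hx)))

lemma continuousAt_indicator_Φintegrand (hφ : ContinuousOn φ (Ici b)) {t₀ x : ℝ} (ht₀ : 0 < t₀)
    (hx : x ≠ b * t₀) :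
    ContinuousAt (fun t => (Ioi (b * t)).indicator (Φintegrand q r φ t) x) t₀ := by
  rcases lt_or_gt_of_ne hx with h | h
  · refine continuousAt_const.congr (f := fun _ => (0 : ℝ)) ?_
    filter_upwards [(isOpen_lt continuous_const (continuous_const.mul continuous_id)).mem_nhds h]
      with t ht
    exact (indicator_of_notMem (not_lt.2 (le_of_lt ht)) _).symm
  · have hxt : b < x / t₀ := (lt_div_iff₀ ht₀).2 h
    have hcont : ContinuousAt (fun t => Φintegrand q r φ t x) t₀ :=
      (continuousAt_const.mul ((hφ.continuousAt (Ici_mem_nhds hxt)).comp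
        (continuousAt_const.div continuousAt_id ht₀.ne')).neg.rexp).mul continuousAt_const
    refine hcont.congr ?_
    filter_upwards [(isOpen_lt (continuous_const.mul continuous_id) continuous_const).mem_nhds h]
      with t ht
    exact (indicator_of_mem ht _).symm

lemma continuousAt_Φ (hq : 1 ≤ q) (hb : 0 < b) (hφ : ContinuousOn φ (Ici b))
    (hφm : MonotoneOn φ (Ici b)) {t₀ : ℝ} (ht₀ : 0 < t₀) : ContinuousAt (Φ q r b φ) t₀ := by
  have hΦ : Φ q r b φ = fun t => ∫ x, (Ioi (b * t)).indicator (Φintegrand q r φ t) x :=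
    funext fun t => (integral_indicator measurableSet_Ioi).symm
  have hnear : ∀ᶠ t in 𝓝 t₀, t₀ / 2 < t := Ioi_mem_nhds (half_lt_self ht₀)
  have hc : 0 < b * (t₀ / 2) := by positivity
  rw [hΦ]
  refine continuousAt_of_dominated
    (bound := (Ioi (b * (t₀ / 2))).indicator fun x => exp (-φ b) * (x ^ r * exp (-x)))
    ?_ ?_ ?_ ?_
  · filter_upwards [hnear] with t ht
    exact ((integrableOn_Φintegrand hq hb hφ hφm (by linarith)).integrable_indicator
      measurableSet_Ioi).aestronglyMeasurable
  · filter_upwards [hnear] with t ht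
    refine ae_of_all _ fun x => ?_
    by_cases hx : x ∈ Ioi (b * t)
    · have hx' : x ∈ Ioi (b * (t₀ / 2)) := (mul_lt_mul_of_pos_left ht hb).trans hx
      rw [indicator_of_mem hx, indicator_of_mem hx']
      exact norm_Φintegrand_le hq hb hφm (by linarith) (le_of_lt hx)
    · rw [indicator_of_notMem hx, norm_zero]
      exact indicator_nonneg (fun y hy => by
        have : 0 < y := hc.trans hy
        positivity) x
  · exact IntegrableOn.integrable_indicator
      ((integrableOn_rpow_mul_exp_neg_Ioi r hc).const_mul _) measurableSet_Ioi
  · filter_upwards [measure_eq_zero_iff_ae_notMem.1 (measure_singleton (b * t₀))] with x hx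
    exact continuousAt_indicator_Φintegrand hφ ht₀ hx

lemma Φ_neg_of_log_le (hq : 1 < q) (hb : 0 < b) (hφ : ContinuousOn φ (Ici b))
    (hφm : MonotoneOn φ (Ici b)) {t : ℝ} (ht : 0 < t) (h : log (q - 1) ≤ b * t) :
    Φ q r b φ t < 0 := by
  have := setIntegral_pos_of_forall_pos (f := fun x => -Φintegrand q r φ t x)
    measurableSet_Ioi (by simp)
    (integrableOn_Φintegrand (r := r) hq.le hb hφ hφm ht).neg fun x hx => by
      have : 0 < x := (mul_pos hb ht).trans hx
      exact neg_pos.2 (mul_neg_of_pos_of_neg (by positivity) ((afun_neg_iff hq).2 (h.trans_lt hx)))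
  rw [integral_neg] at this
  exact neg_pos.1 this

lemma Φ_neg_of_Φ_nonpos (hq : 1 < q) (hb : 0 < b) (hφ : DifferentiableOn ℝ φ (Ici b))
    (hφm : MonotoneOn φ (Ici b)) (hψ : MonotoneOn (fun w => w * deriv φ w) (Ici b))
    {t₁ t₂ : ℝ} (ht₁ : 0 < t₁) (ht : t₁ < t₂) (hΦ : Φ q r b φ t₁ ≤ 0) : Φ q r b φ t₂ < 0 := by
  have ht₂ : 0 < t₂ := ht₁.trans ht
  rcases le_or_gt (log (q - 1)) (b * t₂) with h | h
  · exact Φ_neg_of_log_le hq hb hφ.continuousOn hφm ht₂ h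
  have hbt : b * t₁ < b * t₂ := by gcongr
  have hint := integrableOn_Φintegrand (r := r) hq.le hb hφ.continuousOn hφm ht₁
  have hhead : 0 < ∫ x in Ioo (b * t₁) (b * t₂), Φintegrand q r φ t₁ x :=
    setIntegral_pos_of_forall_pos measurableSet_Ioo (by simp [hbt])
      (hint.mono_set Ioo_subset_Ioi_self) fun x hx => by
        have : 0 < x := (mul_pos hb ht₁).trans hx.1
        exact mul_pos (by positivity) ((afun_pos_iff hq).2 (hx.2.trans h))
  have hsplit : Φ q r b φ t₁ = (∫ x in Ioo (b * t₁) (b * t₂), Φintegrand q r φ t₁ x) +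
      ∫ x in Ioi (b * t₂), Φintegrand q r φ t₁ x := by
    rw [Φ, ← Ioo_union_Ici_eq_Ioi hbt, setIntegral_union
      ((Iio_disjoint_Ici le_rfl).mono_left Ioo_subset_Iio_self) measurableSet_Ici
      (hint.mono_set Ioo_subset_Ioi_self) (hint.mono_set (Ici_subset_Ioi.2 hbt)),
      integral_Ici_eq_integral_Ioi]
  have hbt₂ : 0 < b * t₂ := mul_pos hb ht₂
  calc Φ q r b φ t₂
      = ∫ x in Ioi (b * t₂), Φintegrand q r φ t₁ x * exp (φ (x / t₁) - φ (x / t₂)) := by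
        simp only [Φ, ← Φintegrand_eq_mul_exp]
    _ ≤ exp (φ (log (q - 1) / t₁) - φ (log (q - 1) / t₂)) *
          ∫ x in Ioi (b * t₂), Φintegrand q r φ t₁ x := by
        refine setIntegral_mul_le_of_signChange measurableSet_Ioi h
          (hint.mono_set (Ioi_subset_Ioi hbt.le)) ?_ (fun x hx hle => ?_) (fun x hx hle => ?_)
          (exp_monotone.comp_monotoneOn
            ((monotoneOn_sub_comp_div hb hφ hψ ht₁ ht.le).mono Ioi_subset_Ici_self))
        · simpa only [← Φintegrand_eq_mul_exp] using
            integrableOn_Φintegrand (r := r) hq.le hb hφ.continuousOn hφm ht₂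
        · have : 0 < x := hbt₂.trans hx
          exact mul_nonneg (by positivity) ((afun_nonneg_iff hq).2 hle)
        · have : 0 < x := hbt₂.trans hx
          exact mul_nonpos_of_nonneg_of_nonpos (by positivity) ((afun_nonpos_iff hq).2 hle)
    _ < 0 := mul_neg_of_pos_of_neg (exp_pos _) (by linarith)

lemma mul_setIntegral_le_setIntegral_Φintegrand (hq : 1 < q) (hb : 0 < b)
    (hφ : ContinuousOn φ (Ici b)) (hφm : MonotoneOn φ (Ici b)) {t u v : ℝ} (ht : 0 < t)
    (hu : b * t ≤ u) (hv : v ≤ log (q - 1)) :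
    exp (-φ (v / t)) * ∫ x in Ioo u v, x ^ r * afun q x ≤
      ∫ x in Ioc (b * t) v, Φintegrand q r φ t x := by
  have hu₀ : 0 < u := (mul_pos hb ht).trans_le hu
  have hint := integrableOn_Φintegrand (r := r) hq.le hb hφ hφm ht
  have hIoo : Ioo u v ⊆ Ioi (b * t) := fun x hx => hu.trans_lt hx.1
  rw [← integral_const_mul]
  calc ∫ x in Ioo u v, exp (-φ (v / t)) * (x ^ r * afun q x)
      ≤ ∫ x in Ioo u v, Φintegrand q r φ t x := by
        refine setIntegral_mono_on
          (ContinuousOn.integrableOn_Icc ?_ |>.mono_set Ioo_subset_Icc_self)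
          (hint.mono_set hIoo) measurableSet_Ioo fun x hx => ?_
        · exact continuousOn_const.mul ((continuousOn_id.rpow_const fun x hx =>
            Or.inl (hu₀.trans_le hx.1).ne').mul (continuous_afun hq.le).continuousOn)
        · have hx₀ : 0 < x := hu₀.trans hx.1
          have hxt : b ≤ x / t := (le_div_iff₀ ht).2 (hu.trans hx.1.le)
          have hle : exp (-φ (v / t)) ≤ exp (-φ (x / t)) := by
            gcongr
            exact hφm hxt (hxt.trans (by gcongr; exact hx.2.le)) (by gcongr; exact hx.2.le)
          calc exp (-φ (v / t)) * (x ^ r * afun q x)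
              ≤ exp (-φ (x / t)) * (x ^ r * afun q x) :=
                mul_le_mul_of_nonneg_right hle
                  (mul_nonneg (by positivity) ((afun_nonneg_iff hq).2 (hx.2.le.trans hv)))
            _ = Φintegrand q r φ t x := by rw [Φintegrand]; ring
    _ ≤ ∫ x in Ioc (b * t) v, Φintegrand q r φ t x := by
        refine setIntegral_mono_set (hint.mono_set Ioc_subset_Ioi_self)
          ((ae_restrict_iff' measurableSet_Ioc).2 (ae_of_all _ fun x hx => ?_))
          (Eventually.of_forall fun x hx => ⟨hu.trans_lt hx.1, hx.2.le⟩)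
        have : 0 < x := (mul_pos hb ht).trans hx.1
        exact mul_nonneg (by positivity) ((afun_nonneg_iff hq).2 (hx.2.trans hv))

lemma neg_mul_setIntegral_le_setIntegral_Φintegrand (hq : 1 ≤ q) (hb : 0 < b)
    (hφ : DifferentiableOn ℝ φ (Ici b)) (hφm : MonotoneOn φ (Ici b))
    (hψ : MonotoneOn (fun w => w * deriv φ w) (Ici b)) {t x₀ : ℝ} (ht : 0 < t)
    (hx₀ : b * t ≤ x₀) (hM : 0 ≤ x₀ / t * deriv φ (x₀ / t)) :
    -(exp (-φ (x₀ / t)) *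
        ∫ x in Ioi x₀, x ^ r * exp (-x) * (x / x₀) ^ (-(x₀ / t * deriv φ (x₀ / t)))) ≤
      ∫ x in Ioi x₀, Φintegrand q r φ t x := by
  set M := x₀ / t * deriv φ (x₀ / t)
  have hx₀pos : 0 < x₀ := (mul_pos hb ht).trans_le hx₀
  rw [← integral_const_mul, ← integral_neg]
  refine setIntegral_mono_on
    (((integrableOn_mul_rpow_neg hx₀pos (integrableOn_rpow_mul_exp_neg_Ioi r hx₀pos) hM).const_mul
      _).neg) ((integrableOn_Φintegrand hq hb hφ.continuousOn hφm ht).mono_set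
      (Ioi_subset_Ioi hx₀)) measurableSet_Ioi fun x hx => ?_
  have hx : x₀ < x := hx
  have hxpos : 0 < x := hx₀pos.trans hx
  have hweight : exp (-φ (x / t)) ≤ exp (-φ (x₀ / t)) * (x / x₀) ^ (-M) := by
    have := add_mul_log_div_le hb hφ hψ ((le_div_iff₀ ht).2 hx₀)
      (div_le_div_of_nonneg_right hx.le ht.le)
    rw [div_div_div_cancel_right₀ ht.ne'] at this
    rw [rpow_def_of_pos (div_pos hxpos hx₀pos), ← exp_add]
    gcongr
    linarith
  refine neg_le_of_abs_le ?_
  calc |Φintegrand q r φ t x| = x ^ r * exp (-φ (x / t)) * |afun q x| := by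
        rw [Φintegrand, abs_mul, abs_of_pos (by positivity)]
    _ ≤ x ^ r * (exp (-φ (x₀ / t)) * (x / x₀) ^ (-M)) * exp (-x) := by
        gcongr
        exact abs_afun_le hq x
    _ = exp (-φ (x₀ / t)) * (x ^ r * exp (-x) * (x / x₀) ^ (-M)) := by ring

lemma exists_Φ_pos (hq : 2 < q) (hb : 0 < b) (hφ : DifferentiableOn ℝ φ (Ici b))
    (hψnn : ∀ w ∈ Ici b, 0 ≤ w * deriv φ w) (hψ : MonotoneOn (fun w => w * deriv φ w) (Ici b))
    (hψtop : Tendsto (fun w => w * deriv φ w) atTop atTop) :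
    ∃ t, 0 < t ∧ 0 < Φ q r b φ t := by
  set x₀ := log (q - 1)
  have hq₁ : 1 < q := by linarith
  have hx₀ : 0 < x₀ := log_pos (by linarith)
  have hφm := monotoneOn_of_mul_deriv_nonneg hb hφ hψnn
  set c := ∫ x in Ioo (x₀ / 2) x₀, x ^ r * afun q x
  have hc : 0 < c := by
    refine setIntegral_pos_of_forall_pos measurableSet_Ioo (by simp [hx₀]) ?_ fun x hx => ?_
    · refine ContinuousOn.integrableOn_Icc ?_ |>.mono_set Ioo_subset_Icc_self
      exact (continuousOn_id.rpow_const fun x hx =>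
        Or.inl (show 0 < x by linarith [hx.1]).ne').mul (continuous_afun hq₁.le).continuousOn
    · exact mul_pos (rpow_pos_of_pos (by linarith [hx.1]) r) ((afun_pos_iff hq₁).2 hx.2)
  have hM : Tendsto (fun t => x₀ / t * deriv φ (x₀ / t)) (𝓝[>] 0) atTop :=
    hψtop.comp ((tendsto_inv_nhdsGT_zero.const_mul_atTop hx₀).congr fun t =>
      (div_eq_mul_inv _ _).symm)
  have hJ :=
    (tendsto_setIntegral_mul_rpow_neg hx₀ (integrableOn_rpow_mul_exp_neg_Ioi r hx₀)).comp hM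
  obtain ⟨t, hJt, ht, htx₀⟩ := ((hJ.eventually (gt_mem_nhds hc)).and
    (Ioo_mem_nhdsGT (by positivity : 0 < x₀ / (2 * b)))).exists
  have hbt : b * t ≤ x₀ / 2 := by
    rw [lt_div_iff₀ (by positivity)] at htx₀; linarith
  have hint := integrableOn_Φintegrand (r := r) hq₁.le hb hφ.continuousOn hφm ht
  have hsplit : Φ q r b φ t = (∫ x in Ioc (b * t) x₀, Φintegrand q r φ t x) +
      ∫ x in Ioi x₀, Φintegrand q r φ t x := by
    rw [Φ, ← Ioc_union_Ioi_eq_Ioi (by linarith : b * t ≤ x₀), setIntegral_union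
      Ioc_disjoint_Ioi_same measurableSet_Ioi (hint.mono_set Ioc_subset_Ioi_self)
      (hint.mono_set (Ioi_subset_Ioi (by linarith)))]
  have hhead := mul_setIntegral_le_setIntegral_Φintegrand (r := r) (v := x₀) hq₁ hb
    hφ.continuousOn hφm ht hbt le_rfl
  have htail := neg_mul_setIntegral_le_setIntegral_Φintegrand (r := r) (x₀ := x₀) hq₁.le hb hφ
    hφm hψ ht (by linarith) (hψnn _ ((le_div_iff₀ ht).2 (by linarith)))
  refine ⟨t, ht, ?_⟩
  have := mul_pos (exp_pos (-φ (x₀ / t))) (sub_pos.2 hJt)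
  simp only [Function.comp_apply] at this
  rw [hsplit]
  linarith

end Φ

theorem unique_zero_crossing_halfline_general
    (q : ℝ) (hq : 2 < q) (r : ℝ) (b : ℝ) (hb : 0 < b)
    (φ : ℝ → ℝ) (hφC2 : ContDiffOn ℝ 2 φ (Ici b))
    (hψnn : ∀ w ∈ Ici b, 0 ≤ w * deriv φ w)
    (hψmono : MonotoneOn (fun w => w * deriv φ w) (Ici b))
    (hψtop : Tendsto (fun w => w * deriv φ w) atTop atTop) :
    ∃! t : ℝ, 0 < t ∧
      (∫ x in Ioi (b * t), x ^ r * Real.exp (-(φ (x / t))) * afun q x) = 0 := by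
  show ∃! t, 0 < t ∧ Φ q r b φ t = 0
  have hφ := hφC2.differentiableOn two_ne_zero
  have hφm := monotoneOn_of_mul_deriv_nonneg hb hφ hψnn
  have hq₁ : 1 < q := by linarith
  obtain ⟨t₁, ht₁, hΦt₁⟩ := exists_Φ_pos (r := r) hq hb hφ hψnn hψmono hψtop
  set t₂ := max t₁ (log (q - 1) / b) + 1
  have ht₁₂ : t₁ < t₂ := by linarith [le_max_left t₁ (log (q - 1) / b)]
  have hΦt₂ : Φ q r b φ t₂ < 0 := Φ_neg_of_log_le hq₁ hb hφ.continuousOn hφm (ht₁.trans ht₁₂)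
    (by rw [← div_le_iff₀' hb]; linarith [le_max_right t₁ (log (q - 1) / b)])
  obtain ⟨t, ht, hΦt⟩ := intermediate_value_Icc' ht₁₂.le
    (fun t ht => (continuousAt_Φ hq₁.le hb hφ.continuousOn hφm
      (ht₁.trans_le ht.1)).continuousWithinAt) ⟨hΦt₂.le, hΦt₁.le⟩
  have htpos : 0 < t := ht₁.trans_le ht.1
  refine ⟨t, ⟨htpos, hΦt⟩, fun s ⟨hs, hΦs⟩ => ?_⟩
  rcases lt_trichotomy s t with h | h | h
  · exact absurd hΦt (Φ_neg_of_Φ_nonpos hq₁ hb hφ hφm hψmono hs h hΦs.le).ne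
  · exact h
  · exact absurd hΦs (Φ_neg_of_Φ_nonpos hq₁ hb hφ hφm hψmono htpos h hΦt.le).ne

/-- **Unique zero of `Φ`, case `0 < b < c = ∞`.** -/
theorem unique_zero_crossing_halfline
    (q : ℝ) (hq : 2 < q) (r : ℝ) (b : ℝ) (hb : 0 < b)
    (φ : ℝ → ℝ) (hφC2 : ContDiffOn ℝ 2 φ (Ici b))
    (hφnn : ∀ w ∈ Ici b, 0 ≤ φ w)
    (hψnn : ∀ w ∈ Ici b, 0 ≤ w * deriv φ w)
    (hψmono : MonotoneOn (fun w => w * deriv φ w) (Ici b))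
    (hψtop : Tendsto (fun w => w * deriv φ w) atTop atTop) :
    ∃! t : ℝ, 0 < t ∧
      (∫ x in Ioi (b * t), x ^ r * Real.exp (-(φ (x / t))) * afun q x) = 0 :=
  unique_zero_crossing_halfline_general q hq r b hb φ hφC2 hψnn hψmono hψtop
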